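/- arXiv:math/0211405 — 2 statements merged into one kernel-verified Lean document; each statement's English description precedes it below -/
import Mathlib

section
/- Let (P, π) be a regular Poisson manifold. For 1 ≤ p ≤ dim P, let X^p_0(P) ⊂ X^p(P) be the subspace of p-multivector fields Q such that i_α Q = 0 for every 1-form α in the kernel of the bundle map π: T*P → TP. Then the Poisson differential preserves this subspace: d_π(X^p_0(P)) ⊂ X^{p+1}_0(P). -/
/-!
We work with an abstract, algebraic model of a smooth manifold endowed with a
foliation `F`.  The model records:

* the commutative `ℝ`-algebra `C = C^∞(M)` of smooth functions;
* the `C`-module `V = 𝔛(M)` of vector fields, acting on functions by derivations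
  and equipped with the Lie bracket;
* the submodule `tang = 𝔛(F)` of vector fields tangent to the foliation (closed
  under the bracket), together with the dimension and the codimension of `F`;
* the `C`-module `Ωq` of differential `q`-forms (`q` = codimension of `F`) with its
  Lie derivative, and the predicate `IsTransOrient ν` singling out the transverse
  orientations of `F` (nowhere vanishing `q`-forms `ν` with `i_X ν = 0` for every
  `X` tangent to `F`), with their basic properties recorded as axioms.

Tangential (leafwise) `1`-forms are represented by their values on vector fields,
i.e. by functions `V → C`; the leafwise differential `d_F` is given by the Koszul
formula, so that `H¹_F`-statements are expressed via `LeafwiseClosed`/`LeafwiseExact`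
below, and the Reeb class of a transverse orientation `ν` is represented by any
tangential `1`-form `α` with `L_X ν = α(X) • ν` for all `X` tangent to `F`.
-/
structure FoliatedCtx where
  /-- the commutative `ℝ`-algebra of smooth functions `C^∞(M)` -/
  C : Type
  [ringC : CommRing C]
  [algC : Algebra ℝ C]
  /-- the `C^∞(M)`-module of vector fields on `M` -/
  V : Type
  [acgV : AddCommGroup V]
  [modV : Module C V]
  /-- the action `X ⬝ f` of a vector field on a function (a derivation) -/
  act : V → C → C
  act_add : ∀ X f g, act X (f + g) = act X f + act X g
  act_sub : ∀ X f g, act X (f - g) = act X f - act X g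
  act_zero : ∀ X, act X 0 = 0
  act_mul : ∀ X f g, act X (f * g) = f * act X g + g * act X f
  act_addV : ∀ X Y f, act (X + Y) f = act X f + act Y f
  act_smulV : ∀ (g : C) X f, act (g • X) f = g * act X f
  /-- the Lie bracket of vector fields -/
  bracket : V → V → V
  bracket_act : ∀ X Y f, act (bracket X Y) f = act X (act Y f) - act Y (act X f)
  /-- the dimension of the leaves of the foliation `F` -/
  dimLeaf : ℕ
  /-- the codimension of the foliation `F` -/
  codim : ℕ
  /-- the submodule `𝔛(F)` of vector fields tangent to the foliation -/
  tang : Submodule C V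
  tang_bracket : ∀ X Y, X ∈ tang → Y ∈ tang → bracket X Y ∈ tang
  /-- differential `q`-forms on `M` (`q` = codimension of the foliation) -/
  Ωq : Type
  [acgQ : AddCommGroup Ωq]
  [modQ : Module C Ωq]
  /-- the Lie derivative of a `q`-form along a vector field -/
  lieQ : V → Ωq → Ωq
  lieQ_smul : ∀ X f ν, lieQ X (f • ν) = act X f • ν + f • lieQ X ν
  lieQ_bracket : ∀ X Y ν,
    lieQ (bracket X Y) ν = lieQ X (lieQ Y ν) - lieQ Y (lieQ X ν)
  /-- `IsTransOrient ν`: the `q`-form `ν` is a transverse orientation of `F`, i.e.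
  `ν` vanishes nowhere and `i_X ν = 0` for every vector field `X` tangent to `F` -/
  IsTransOrient : Ωq → Prop
  /-- `Pos f`: the function `f` is everywhere positive -/
  Pos : C → Prop
  /-- for a transverse orientation `ν` and `X` tangent to `F`, `L_X ν` is
  proportional to `ν` -/
  reeb_exists : ∀ ν, IsTransOrient ν → ∀ X ∈ tang, ∃ a : C, lieQ X ν = a • ν
  /-- a transverse orientation vanishes nowhere -/
  orient_nonzero : ∀ ν, IsTransOrient ν → ∀ a : C, a • ν = 0 → a = 0
  /-- any two transverse orientations differ by a positive function -/
  orient_conformal : ∀ ν ν', IsTransOrient ν → IsTransOrient ν' →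
    ∃ a, Pos a ∧ ν' = a • ν
  smul_orient : ∀ (a : C) ν, Pos a → IsTransOrient ν → IsTransOrient (a • ν)
  /-- a positive function `a` admits a logarithm `h`, so that `X ⬝ a = a * (X ⬝ h)` -/
  exists_log : ∀ a, Pos a → ∃ h, ∀ X, act X a = a * act X h

attribute [instance] FoliatedCtx.ringC FoliatedCtx.algC FoliatedCtx.acgV
  FoliatedCtx.modV FoliatedCtx.acgQ FoliatedCtx.modQ

namespace FoliatedCtx

variable (M : FoliatedCtx)

/-- the foliation is transversally oriented -/
def TransversallyOriented : Prop := ∃ ν, M.IsTransOrient ν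

/-- a tangential `1`-form (represented by its values on vector fields) is leafwise
closed: `d_F α = 0`, where
`d_F α (X, Y) = X ⬝ α(Y) - Y ⬝ α(X) - α([X,Y])` for `X, Y` tangent to `F`. -/
def LeafwiseClosed (α : M.V → M.C) : Prop :=
  ∀ X ∈ M.tang, ∀ Y ∈ M.tang,
    M.act X (α Y) - M.act Y (α X) - α (M.bracket X Y) = 0

/-- a tangential `1`-form is leafwise exact: `α = d_F h` on vector fields tangent
to the foliation -/
def LeafwiseExact (α : M.V → M.C) : Prop :=
  ∃ h : M.C, ∀ X ∈ M.tang, α X = M.act X h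

/-- `α` is the Reeb tangential `1`-form of the transverse orientation `ν`:
`L_X ν = α(X) • ν` for every `X` tangent to the foliation.  Its leafwise
cohomology class is the Reeb class `mod(F)`. -/
def IsReebForm (ν : M.Ωq) (α : M.V → M.C) : Prop :=
  M.IsTransOrient ν ∧ ∀ X ∈ M.tang, M.lieQ X ν = α X • ν

/-- the Reeb class `mod(F) ∈ H¹_F(M)` vanishes -/
def ReebClassZero : Prop :=
  ∀ ν α, M.IsReebForm ν α → M.LeafwiseExact α

end FoliatedCtx
/-- An abstract regular Poisson manifold `(P, π)`.  On top of the underlying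
foliated manifold (whose foliation `tang` is the symplectic foliation of `π`),
we record:

* the `C`-module `Ω1` of differential `1`-forms, with the differential `d` of
  functions, the evaluation pairing `ev` and the Lie derivative `lie1`;
* the bundle map `sharp = π : T*P → TP` induced by the Poisson tensor, which is
  `C`-linear, skew (`π(α, β) = β(π(α)) = -α(π(β))`) and intertwines the Koszul
  bracket `[α, β]_π = L_{π(α)} β - L_{π(β)} α - d(π(α, β))` of `1`-forms with the
  Lie bracket of vector fields;
* regularity of `π`: the image of `sharp` is exactly the module of vector fields
  tangent to the symplectic foliation, and the kernel of `sharp` is the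
  annihilator of the symplectic foliation;
* the `C`-module `Ωtop` of top degree forms with its Lie derivative, the predicate
  `IsVolume` singling out the volume forms, and the divergence axioms needed to
  speak about modular vector fields. -/
structure PoissonCtx extends FoliatedCtx where
  /-- differential `1`-forms on `P` -/
  Ω1 : Type
  [acg1 : AddCommGroup Ω1]
  [mod1 : Module C Ω1]
  /-- the differential of functions -/
  d : C → Ω1
  d_add : ∀ f g, d (f + g) = d f + d g
  /-- evaluation of `1`-forms on vector fields -/
  ev : Ω1 → V → C
  ev_addl : ∀ α β X, ev (α + β) X = ev α X + ev β X
  ev_subl : ∀ α β X, ev (α - β) X = ev α X - ev β X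
  ev_smull : ∀ (f : C) α X, ev (f • α) X = f * ev α X
  ev_addr : ∀ α X Y, ev α (X + Y) = ev α X + ev α Y
  ev_smulr : ∀ α (f : C) X, ev α (f • X) = f * ev α X
  ev_d : ∀ f X, ev (d f) X = act X f
  /-- the bundle map `π : T*P → TP` induced by the Poisson tensor -/
  sharp : Ω1 → V
  sharp_add : ∀ α β, sharp (α + β) = sharp α + sharp β
  sharp_sub : ∀ α β, sharp (α - β) = sharp α - sharp β
  sharp_smul : ∀ (f : C) α, sharp (f • α) = f • sharp α
  /-- skew-symmetry of the Poisson tensor: `π(α, β) = β(π(α)) = -α(π(β))` -/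
  sharp_skew : ∀ α β, ev β (sharp α) = - ev α (sharp β)
  /-- the Lie derivative of `1`-forms -/
  lie1 : V → Ω1 → Ω1
  lie1_ev : ∀ X α Y, ev (lie1 X α) Y = act X (ev α Y) - ev α (bracket X Y)
  /-- `π` intertwines the Koszul bracket
  `[α, β]_π = L_{π(α)} β - L_{π(β)} α - d(π(α, β))` with the Lie bracket:
  `π([α, β]_π) = [π(α), π(β)]` -/
  sharp_morph : ∀ α β,
    sharp (lie1 (sharp α) β - lie1 (sharp β) α - d (ev β (sharp α))) =
      bracket (sharp α) (sharp β)
  /-- `π(α)` is tangent to the symplectic foliation -/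
  sharp_mem : ∀ α, sharp α ∈ tang
  /-- regularity: every vector field tangent to the symplectic foliation is of the
  form `π(α)` -/
  tang_sharp_surj : ∀ X ∈ tang, ∃ α, sharp α = X
  /-- regularity: the kernel of `π` is the annihilator of the symplectic
  foliation -/
  sharp_ker : ∀ α, (∀ X ∈ tang, ev α X = 0) → sharp α = 0
  /-- top degree differential forms on `P` -/
  Ωtop : Type
  [acgT : AddCommGroup Ωtop]
  [modT : Module C Ωtop]
  /-- the Lie derivative of top degree forms -/
  lieTop : V → Ωtop → Ωtop
  lieTop_smul : ∀ X f μ, lieTop X (f • μ) = act X f • μ + f • lieTop X μ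
  /-- `IsVolume μ` : the top degree form `μ` is a volume form -/
  IsVolume : Ωtop → Prop
  exists_volume : ∃ μ, IsVolume μ
  vol_nonzero : ∀ μ, IsVolume μ → ∀ a : C, a • μ = 0 → a = 0
  /-- divergence: `L_X μ` is proportional to a volume form `μ` -/
  vol_div : ∀ μ, IsVolume μ → ∀ X, ∃ a : C, lieTop X μ = a • μ
  smul_volume : ∀ (a : C) μ, Pos a → IsVolume μ → IsVolume (a • μ)
  /-- the modular vector field of a volume form exists -/
  exists_modular : ∀ μ, IsVolume μ → ∃ φ : V,
    ∀ f : C, lieTop (sharp (d f)) μ = act φ f • μ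

attribute [instance] PoissonCtx.acg1 PoissonCtx.mod1 PoissonCtx.acgT
  PoissonCtx.modT

namespace PoissonCtx

variable (M : PoissonCtx)

/-- the Poisson bracket of functions: `{f, g} = π(df) ⬝ g` -/
def pbr (f g : M.C) : M.C := M.act (M.sharp (M.d f)) g

/-- `X` is a Poisson vector field, i.e. `L_X π = 0`; equivalently, `X` is a
`d_π`-cocycle in degree one of the Poisson cochain complex. -/
def IsPoissonVF (X : M.V) : Prop :=
  ∀ f g, M.act X (M.pbr f g) = M.pbr (M.act X f) g + M.pbr f (M.act X g)

/-- `X` is a Hamiltonian vector field `X = π(df) = X_f`; the Hamiltonian vector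
fields are exactly the `d_π`-coboundaries in degree one of the Poisson cochain
complex. -/
def IsHamiltonianVF (X : M.V) : Prop := ∃ f, X = M.sharp (M.d f)

/-- `φ` is the modular vector field of the volume form `μ`, i.e.
`φ : f ↦ div_μ (π(df))`: for every function `f`, `L_{X_f} μ = (φ ⬝ f) • μ`. -/
def IsModularVF (μ : M.Ωtop) (φ : M.V) : Prop :=
  M.IsVolume μ ∧ ∀ f, M.lieTop (M.sharp (M.d f)) μ = M.act φ f • μ

/-- the Poisson manifold is unimodular: its modular class `mod(P) ∈ H¹_π(P)`
vanishes, i.e. every modular vector field is Hamiltonian -/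
def Unimodular : Prop :=
  ∀ μ φ, M.IsModularVF μ φ → M.IsHamiltonianVF φ

end PoissonCtx
namespace PoissonCtx

variable (M : PoissonCtx)

/-- the Koszul bracket of `1`-forms:
`[α, β]_π = L_{π(α)} β - L_{π(β)} α - d(π(α, β))` -/
def kbr (α β : M.Ω1) : M.Ω1 :=
  M.lie1 (M.sharp α) β - M.lie1 (M.sharp β) α - M.d (M.ev β (M.sharp α))

/-- `p`-multivector fields, seen as (multilinear alternating) maps on `p`-tuples
of `1`-forms -/
abbrev MultiVec (p : ℕ) : Type := (Fin p → M.Ω1) → M.C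

/-- `Q` is a genuine `p`-multivector field: it is `C^∞(P)`-multilinear and
alternating in its `1`-form arguments -/
def IsMultiVec {p : ℕ} (Q : M.MultiVec p) : Prop :=
  (∀ (αs : Fin p → M.Ω1) (i : Fin p) (β γ : M.Ω1),
      Q (Function.update αs i (β + γ)) =
        Q (Function.update αs i β) + Q (Function.update αs i γ)) ∧
  (∀ (αs : Fin p → M.Ω1) (i : Fin p) (f : M.C) (β : M.Ω1),
      Q (Function.update αs i (f • β)) = f * Q (Function.update αs i β)) ∧
  (∀ (αs : Fin p → M.Ω1) (i j : Fin p), i ≠ j → αs i = αs j → Q αs = 0)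

/-- the Lichnerowicz–Poisson differential `d_π`, given by the Koszul formula
`d_π Q (α₀, …, α_p) = ∑ j (-1)^j π(α_j) ⬝ Q(α₀, …, α̂_j, …, α_p)
  + ∑ i< j (-1)^{i+j} Q([α_i, α_j]_π, α₀, …, α̂_i, …, α̂_j, …, α_p)` -/
def dpi : ∀ {p : ℕ}, M.MultiVec p → M.MultiVec (p + 1)
  | 0, Q => fun αs => M.act (M.sharp (αs 0)) (Q Fin.elim0)
  | p + 1, Q => fun αs =>
      (∑ j : Fin (p + 2),
        (-1 : M.C) ^ (j : ℕ) * M.act (M.sharp (αs j)) (Q (αs ∘ j.succAbove))) +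
      ∑ i : Fin (p + 2), ∑ j : Fin (p + 2),
        if h : (i : ℕ) < (j : ℕ) then
          (-1 : M.C) ^ ((i : ℕ) + (j : ℕ)) *
            Q (Fin.cons (M.kbr (αs i) (αs j))
                (fun k : Fin p => αs (j.succAbove
                  ((⟨(i : ℕ), by have := j.isLt; omega⟩ : Fin (p + 1)).succAbove k))))
        else 0

/-- `Q` belongs to the subspace `𝔛^p₀(P) ⊆ 𝔛^p(P)`: the `p`-multivector field
`Q` satisfies `i_α Q = 0` for every `1`-form `α` in the kernel of the bundle map
`π : T*P → TP` -/
def InX0MV {p : ℕ} (Q : M.MultiVec p) : Prop :=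
  ∀ αs : Fin p → M.Ω1, (∃ i, M.sharp (αs i) = 0) → Q αs = 0

namespace X0Aux

variable {M : PoissonCtx}

lemma act_zero_vf (f : M.C) : M.act 0 f = 0 := by
  have h := M.act_smulV 0 0 f
  simpa using h

lemma sharp_zero : M.sharp (0 : M.Ω1) = 0 := by
  have h := M.sharp_sub 0 0
  simpa using h

lemma ev_zero_left (X : M.V) : M.ev (0 : M.Ω1) X = 0 := by
  have h := M.ev_smull 0 0 X
  simpa using h

lemma ev_zero_right (α : M.Ω1) : M.ev α (0 : M.V) = 0 := by
  have h := M.ev_smulr α 0 0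
  simpa using h

lemma ev_neg_right (α : M.Ω1) (X : M.V) : M.ev α (-X) = - M.ev α X := by
  have h := M.ev_addr α X (-X)
  rw [add_neg_cancel, ev_zero_right] at h
  linear_combination -h

lemma d_zero : M.d (0 : M.C) = 0 := by
  have h := M.d_add 0 0
  rw [add_zero] at h
  exact left_eq_add.mp h

lemma ker_ev {α : M.Ω1} (hα : M.sharp α = 0) : ∀ X ∈ M.tang, M.ev α X = 0 := by
  intro X hX
  obtain ⟨δ, rfl⟩ := M.tang_sharp_surj X hX
  rw [M.sharp_skew δ α, hα, ev_zero_right, neg_zero]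

lemma sharp_lie1_tang {α : M.Ω1} (hα : M.sharp α = 0) {Z : M.V} (hZ : Z ∈ M.tang)
    : M.sharp (M.lie1 Z α) = 0 := by
  apply M.sharp_ker
  intro Y hY
  rw [M.lie1_ev, ker_ev hα Y hY, M.act_zero,
    ker_ev hα _ (M.tang_bracket Z Y hZ hY), sub_zero]

lemma ev_bracket_zero_right (α : M.Ω1) (Z : M.V) : M.ev α (M.bracket Z 0) = 0 := by
  have h := M.lie1_ev Z α 0
  rw [ev_zero_right, ev_zero_right, M.act_zero] at h
  linear_combination h

lemma sharp_lie1_zero_form (Z : M.V) : M.sharp (M.lie1 Z (0 : M.Ω1)) = 0 := by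
  apply M.sharp_ker
  intro Y hY
  rw [M.lie1_ev, ev_zero_left, ev_zero_left, M.act_zero, sub_zero]

lemma sharp_lie1_zero_vf (γ : M.Ω1) : M.sharp (M.lie1 0 γ) = 0 := by
  have key : ∀ δ : M.Ω1, M.bracket 0 (M.sharp δ) = - M.bracket (M.sharp δ) 0 := by
    intro δ
    have h1 := M.sharp_morph δ 0
    have h2 := M.sharp_morph 0 δ
    rw [sharp_zero, ev_zero_left, d_zero, sub_zero, M.sharp_sub,
      sharp_lie1_zero_form, zero_sub] at h1
    rw [sharp_zero, ev_zero_right, d_zero, sub_zero, M.sharp_sub,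
      sharp_lie1_zero_form, sub_zero] at h2
    rw [← h2, ← h1, neg_neg]
  apply M.sharp_ker
  intro X hX
  obtain ⟨δ, rfl⟩ := M.tang_sharp_surj X hX
  rw [M.lie1_ev, act_zero_vf, key δ, ev_neg_right, ev_bracket_zero_right,
    neg_zero, sub_zero]

lemma sharp_kbr_of_left {α : M.Ω1} (hα : M.sharp α = 0) (β : M.Ω1) :
    M.sharp (M.kbr α β) = 0 := by
  unfold PoissonCtx.kbr
  rw [hα, ev_zero_right, d_zero, sub_zero, M.sharp_sub, sharp_lie1_zero_vf,
    sharp_lie1_tang hα (M.sharp_mem β), sub_zero]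

lemma sharp_kbr_of_right {β : M.Ω1} (hβ : M.sharp β = 0) (α : M.Ω1) :
    M.sharp (M.kbr α β) = 0 := by
  unfold PoissonCtx.kbr
  rw [hβ, M.sharp_skew α β, hβ, ev_zero_right, neg_zero, d_zero, sub_zero,
    M.sharp_sub, sharp_lie1_tang hβ (M.sharp_mem α), sharp_lie1_zero_vf,
    sub_zero]

end X0Aux
end PoissonCtx
/-- Let `(P, π)` be a regular Poisson manifold.  For
`1 ≤ p ≤ dim P`, let `𝔛^p₀(P) ⊆ 𝔛^p(P)` be the subspace of `p`-multivector
fields `Q` such that `i_α Q = 0` for every `1`-form `α` in the kernel of the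
bundle map `π : T*P → TP`.  Then the Poisson differential preserves this
subspace: `d_π(𝔛^p₀(P)) ⊆ 𝔛^{p+1}₀(P)`. -/
theorem dpi_preserves_X0 (M : PoissonCtx) (p : ℕ)
    (hp1 : 1 ≤ p) (hp2 : p ≤ M.dimLeaf + M.codim)
    (Q : M.MultiVec p) (hQ : M.IsMultiVec Q) (h0 : M.InX0MV Q) :
    M.InX0MV (M.dpi Q) := by
  obtain ⟨q, rfl⟩ : ∃ q, p = q + 1 := ⟨p - 1, (Nat.succ_pred_eq_of_pos hp1).symm⟩
  intro αs h
  obtain ⟨i₀, hi₀⟩ := h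
  have term1 : ∀ j : Fin (q + 2),
      (-1 : M.C) ^ (j : ℕ) * M.act (M.sharp (αs j)) (Q (αs ∘ j.succAbove)) = 0 := by
    intro j
    by_cases hj : j = i₀
    · subst hj
      rw [hi₀, PoissonCtx.X0Aux.act_zero_vf, mul_zero]
    · obtain ⟨k, hk⟩ := Fin.exists_succAbove_eq (Ne.symm hj)
      have : Q (αs ∘ j.succAbove) = 0 := by
        apply h0
        exact ⟨k, by show M.sharp (αs (j.succAbove k)) = 0; rw [hk]; exact hi₀⟩
      rw [this, M.act_zero, mul_zero]
  have term2 : ∀ i j : Fin (q + 2), ∀ hij : (i : ℕ) < (j : ℕ),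
      Q (Fin.cons (M.kbr (αs i) (αs j))
        (fun k : Fin q => αs (j.succAbove
          ((⟨(i : ℕ), by have := j.isLt; omega⟩ : Fin (q + 1)).succAbove k)))) = 0 := by
    intro i j hij
    by_cases hi : i = i₀
    · subst hi
      apply h0
      refine ⟨0, ?_⟩
      rw [Fin.cons_zero]
      exact PoissonCtx.X0Aux.sharp_kbr_of_left hi₀ _
    · by_cases hjj : j = i₀
      · subst hjj
        apply h0
        refine ⟨0, ?_⟩
        rw [Fin.cons_zero]
        exact PoissonCtx.X0Aux.sharp_kbr_of_right hi₀ _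
      · have hiq : (i : ℕ) < q + 1 := by have := j.isLt; omega
        set i' : Fin (q + 1) := ⟨(i : ℕ), hiq⟩ with hi'
        obtain ⟨a, ha⟩ := Fin.exists_succAbove_eq (Ne.symm hjj)
        have hji' : j.succAbove i' = Fin.castSucc i' :=
          Fin.succAbove_of_castSucc_lt _ _ (by rw [Fin.lt_def]; simpa [hi'] using hij)
        have hne : j.succAbove i' ≠ i₀ := by
          rw [hji']
          intro hcon
          apply hi
          apply Fin.ext
          rw [← hcon]
          simp [hi']
        have hai : a ≠ i' := by
          intro hcon
          rw [hcon] at ha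
          exact hne ha
        obtain ⟨k, hk⟩ := Fin.exists_succAbove_eq hai
        apply h0
        refine ⟨k.succ, ?_⟩
        rw [Fin.cons_succ]
        show M.sharp (αs (j.succAbove (i'.succAbove k))) = 0
        rw [hk, ha]
        exact hi₀
  show M.dpi Q αs = 0
  simp only [PoissonCtx.dpi]
  rw [Finset.sum_eq_zero (fun j _ => term1 j), zero_add]
  apply Finset.sum_eq_zero
  intro i _
  apply Finset.sum_eq_zero
  intro j _
  by_cases hij : (i : ℕ) < (j : ℕ)
  · rw [dif_pos hij, term2 i j hij, mul_zero]
  · rw [dif_neg hij]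
end

section
/- Let (P, π) be a regular Poisson manifold with symplectic foliation F. The map π: A^p_F(P) → X^p_0(P) defined by π(ω)(α₁,…,α_p) = ω(π(α₁),…,π(α_p)) is an isomorphism from tangential p-forms onto the space X^p_0(P) of p-multivector fields annihilated by the kernel of π, and it intertwines the differentials: π(d_F ω) = d_π π(ω). Consequently π induces an isomorphism π*: H^p_F(P) → H^p(X^•_0(P)) from leafwise cohomology onto the cohomology of the subcomplex (X^•_0(P), d_π). -/
namespace PoissonCtx

variable (M : PoissonCtx)

/-- tangential differential `p`-forms `𝒜^p_F(P)`, seen as (multilinear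
alternating) maps on `p`-tuples of vector fields tangent to the symplectic
foliation -/
abbrev TForm (p : ℕ) : Type := (Fin p → M.tang) → M.C

/-- the bracket of two vector fields tangent to the foliation -/
def braT (X Y : M.tang) : M.tang :=
  ⟨M.bracket X Y, M.tang_bracket _ _ X.2 Y.2⟩

/-- `ω` is a genuine tangential `p`-form: it is `C^∞(P)`-multilinear and
alternating in its arguments -/
def IsTangForm {p : ℕ} (ω : M.TForm p) : Prop :=
  (∀ (Xs : Fin p → M.tang) (i : Fin p) (Y Z : M.tang),
      ω (Function.update Xs i (Y + Z)) =
        ω (Function.update Xs i Y) + ω (Function.update Xs i Z)) ∧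
  (∀ (Xs : Fin p → M.tang) (i : Fin p) (f : M.C) (Y : M.tang),
      ω (Function.update Xs i (f • Y)) = f * ω (Function.update Xs i Y)) ∧
  (∀ (Xs : Fin p → M.tang) (i j : Fin p), i ≠ j → Xs i = Xs j → ω Xs = 0)

/-- the leafwise differential `d_F` on tangential forms, given by the Koszul
formula
`d_F ω (X₁, …, X_{r+1}) = ∑ i (-1)^{i+1} X_i ⬝ ω(X₁, …, X̂_i, …, X_{r+1})
  + ∑ i<j (-1)^{i+j} ω([X_i, X_j], X₁, …, X̂_i, …, X̂_j, …, X_{r+1})` -/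
def dF : ∀ {p : ℕ}, M.TForm p → M.TForm (p + 1)
  | 0, ω => fun Xs => M.act (Xs 0 : M.V) (ω Fin.elim0)
  | p + 1, ω => fun Xs =>
      (∑ j : Fin (p + 2),
        (-1 : M.C) ^ (j : ℕ) * M.act (Xs j : M.V) (ω (Xs ∘ j.succAbove))) +
      ∑ i : Fin (p + 2), ∑ j : Fin (p + 2),
        if h : (i : ℕ) < (j : ℕ) then
          (-1 : M.C) ^ ((i : ℕ) + (j : ℕ)) *
            ω (Fin.cons (M.braT (Xs i) (Xs j))
                (fun k : Fin p => Xs (j.succAbove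
                  ((⟨(i : ℕ), by have := j.isLt; omega⟩ : Fin (p + 1)).succAbove k))))
        else 0

/-- the map `π : 𝒜^p_F(P) → 𝔛^p₀(P)` induced by the bundle map `π : T*P → TP`:
`π(ω)(α₁, …, α_p) = ω(π(α₁), …, π(α_p))` -/
def toMV {p : ℕ} (ω : M.TForm p) : M.MultiVec p :=
  fun αs => ω fun i => ⟨M.sharp (αs i), M.sharp_mem (αs i)⟩

end PoissonCtx

namespace PoissonCtx

variable (M : PoissonCtx)

/-- a choice of `1`-form `α` with `π(α) = X` for `X` tangent to `F` -/
noncomputable def ch (X : M.tang) : M.Ω1 := (M.tang_sharp_surj X X.2).choose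

lemma sharp_ch (X : M.tang) : M.sharp (M.ch X) = (X : M.V) :=
  (M.tang_sharp_surj X X.2).choose_spec

lemma tform_zero_arg {p : ℕ} (ω : M.TForm p) (hω : M.IsTangForm ω)
    (Xs : Fin p → M.tang) (i : Fin p) (h : Xs i = 0) : ω Xs = 0 := by
  have h1 : Function.update Xs i ((0 : M.C) • (0 : M.tang)) = Xs := by
    rw [smul_zero, ← h, Function.update_eq_self]
  have h2 := hω.2.1 Xs i 0 0
  rw [h1] at h2
  rw [h2, zero_mul]

lemma tupd {p : ℕ} (αs : Fin p → M.Ω1) (i : Fin p) (β : M.Ω1) :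
    (fun j => (⟨M.sharp (Function.update αs i β j), M.sharp_mem _⟩ : M.tang)) =
    Function.update (fun j => (⟨M.sharp (αs j), M.sharp_mem _⟩ : M.tang)) i
      ⟨M.sharp β, M.sharp_mem β⟩ := by
  funext j
  by_cases hj : j = i
  · subst hj; simp
  · simp [Function.update_of_ne hj]

lemma toMV_tang {p : ℕ} (ω : M.TForm p) (hω : M.IsTangForm ω) :
    M.IsMultiVec (M.toMV ω) ∧ M.InX0MV (M.toMV ω) := by
  constructor
  · refine ⟨?_, ?_, ?_⟩
    · intro αs i β γ
      show ω _ = ω _ + ω _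
      rw [M.tupd αs i (β + γ), M.tupd αs i β, M.tupd αs i γ]
      have e : (⟨M.sharp (β + γ), M.sharp_mem _⟩ : M.tang) =
          ⟨M.sharp β, M.sharp_mem β⟩ + ⟨M.sharp γ, M.sharp_mem γ⟩ :=
        Subtype.ext (M.sharp_add β γ)
      rw [e]
      exact hω.1 _ i _ _
    · intro αs i f β
      show ω _ = f * ω _
      rw [M.tupd αs i (f • β), M.tupd αs i β]
      have e : (⟨M.sharp (f • β), M.sharp_mem _⟩ : M.tang) =
          f • (⟨M.sharp β, M.sharp_mem β⟩ : M.tang) :=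
        Subtype.ext (M.sharp_smul f β)
      rw [e]
      exact hω.2.1 _ i f _
    · intro αs i j hij hαs
      exact hω.2.2 _ i j hij (Subtype.ext (congrArg M.sharp hαs))
  · rintro αs ⟨i, hi⟩
    exact M.tform_zero_arg ω hω _ i (Subtype.ext hi)

lemma toMV_inj {p : ℕ} (ω ω' : M.TForm p) (h : M.toMV ω = M.toMV ω') : ω = ω' := by
  funext Xs
  have h1 : (fun i => (⟨M.sharp (M.ch (Xs i)), M.sharp_mem _⟩ : M.tang)) = Xs :=
    funext fun i => Subtype.ext (M.sharp_ch (Xs i))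
  have h2 := congrFun h (fun i => M.ch (Xs i))
  show ω Xs = ω' Xs
  calc ω Xs = M.toMV ω (fun i => M.ch (Xs i)) := by
        show _ = ω _
        rw [h1]
    _ = M.toMV ω' (fun i => M.ch (Xs i)) := h2
    _ = ω' Xs := by
        show ω' _ = _
        rw [h1]

lemma Q_update {p : ℕ} (Q : M.MultiVec p) (hQ : M.IsMultiVec Q) (h0 : M.InX0MV Q)
    (αs : Fin p → M.Ω1) (i : Fin p) (β : M.Ω1) (hβ : M.sharp β = M.sharp (αs i)) :
    Q (Function.update αs i β) = Q αs := by
  have h1 : Q (Function.update αs i (β + (αs i - β))) =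
      Q (Function.update αs i β) + Q (Function.update αs i (αs i - β)) := hQ.1 _ _ _ _
  have h2 : Q (Function.update αs i (αs i - β)) = 0 := by
    apply h0
    exact ⟨i, by rw [Function.update_self, M.sharp_sub, hβ, sub_self]⟩
  have h3 : β + (αs i - β) = αs i := by abel
  rw [h3, Function.update_eq_self, h2, add_zero] at h1
  exact h1.symm

lemma Q_resp {p : ℕ} (Q : M.MultiVec p) (hQ : M.IsMultiVec Q) (h0 : M.InX0MV Q)
    (αs βs : Fin p → M.Ω1) (h : ∀ i, M.sharp (αs i) = M.sharp (βs i)) :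
    Q βs = Q αs := by
  have key : ∀ s : Finset (Fin p),
      Q (fun i => if i ∈ s then βs i else αs i) = Q αs := by
    intro s
    induction s using Finset.induction_on with
    | empty => simp
    | @insert a s ha ih =>
      have heq : (fun i => if i ∈ insert a s then βs i else αs i) =
          Function.update (fun i => if i ∈ s then βs i else αs i) a (βs a) := by
        funext j
        by_cases hj : j = a
        · subst hj; simp
        · simp [Function.update_of_ne hj, hj]
      rw [heq, M.Q_update Q hQ h0 _ a (βs a) ?_, ih]
      simp only [ha, if_neg ha]
      exact (h a).symm
  have h2 := key Finset.univ
  simpa using h2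

/-- the inverse map `𝔛^p₀(P) → 𝒜^p_F(P)` -/
noncomputable def ωof {p : ℕ} (Q : M.MultiVec p) : M.TForm p :=
  fun Xs => Q fun i => M.ch (Xs i)

lemma ωof_eq {p : ℕ} (Q : M.MultiVec p) (hQ : M.IsMultiVec Q) (h0 : M.InX0MV Q)
    (Xs : Fin p → M.tang) (αs : Fin p → M.Ω1)
    (h : ∀ i, M.sharp (αs i) = (Xs i : M.V)) : M.ωof Q Xs = Q αs :=
  M.Q_resp Q hQ h0 αs (fun i => M.ch (Xs i))
    (fun i => by rw [M.sharp_ch, h i])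

lemma ωof_tang {p : ℕ} (Q : M.MultiVec p) (hQ : M.IsMultiVec Q) (h0 : M.InX0MV Q) :
    M.IsTangForm (M.ωof Q) := by
  refine ⟨?_, ?_, ?_⟩
  · intro Xs i Y Z
    have e1 : M.ωof Q (Function.update Xs i (Y + Z)) =
        Q (Function.update (fun j => M.ch (Xs j)) i (M.ch Y + M.ch Z)) := by
      apply M.ωof_eq Q hQ h0
      intro j
      by_cases hj : j = i
      · subst hj
        simp [M.sharp_add, M.sharp_ch]
      · simp [Function.update_of_ne hj, M.sharp_ch]
    have e2 : M.ωof Q (Function.update Xs i Y) =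
        Q (Function.update (fun j => M.ch (Xs j)) i (M.ch Y)) := by
      apply M.ωof_eq Q hQ h0
      intro j
      by_cases hj : j = i
      · subst hj; simp [M.sharp_ch]
      · simp [Function.update_of_ne hj, M.sharp_ch]
    have e3 : M.ωof Q (Function.update Xs i Z) =
        Q (Function.update (fun j => M.ch (Xs j)) i (M.ch Z)) := by
      apply M.ωof_eq Q hQ h0
      intro j
      by_cases hj : j = i
      · subst hj; simp [M.sharp_ch]
      · simp [Function.update_of_ne hj, M.sharp_ch]
    rw [e1, e2, e3]
    exact hQ.1 _ _ _ _
  · intro Xs i f Y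
    have e1 : M.ωof Q (Function.update Xs i (f • Y)) =
        Q (Function.update (fun j => M.ch (Xs j)) i (f • M.ch Y)) := by
      apply M.ωof_eq Q hQ h0
      intro j
      by_cases hj : j = i
      · subst hj
        simp [M.sharp_smul, M.sharp_ch]
      · simp [Function.update_of_ne hj, M.sharp_ch]
    have e2 : M.ωof Q (Function.update Xs i Y) =
        Q (Function.update (fun j => M.ch (Xs j)) i (M.ch Y)) := by
      apply M.ωof_eq Q hQ h0
      intro j
      by_cases hj : j = i
      · subst hj; simp [M.sharp_ch]
      · simp [Function.update_of_ne hj, M.sharp_ch]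
    rw [e1, e2]
    exact hQ.2.1 _ _ _ _
  · intro Xs i j hij hXs
    exact hQ.2.2 _ i j hij (by simp only [hXs])

lemma toMV_ωof {p : ℕ} (Q : M.MultiVec p) (hQ : M.IsMultiVec Q) (h0 : M.InX0MV Q) :
    M.toMV (M.ωof Q) = Q := by
  funext αs
  exact M.ωof_eq Q hQ h0 _ αs (fun i => rfl)

lemma chain_map {p : ℕ} (ω : M.TForm p) : M.toMV (M.dF ω) = M.dpi (M.toMV ω) := by
  cases p with
  | zero =>
    funext αs
    show M.dF ω _ = _
    simp only [dF, dpi, toMV]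
    congr 1
    exact congrArg ω (funext fun i => i.elim0)
  | succ p =>
    funext αs
    show M.dF ω _ = _
    simp only [dF, dpi, toMV]
    congr 1
    refine Finset.sum_congr rfl fun i _ => Finset.sum_congr rfl fun j _ => ?_
    split
    · congr 1
      refine congrArg ω ?_
      funext k
      refine Fin.cases ?_ ?_ k
      · simp only [Fin.cons_zero]
        refine Subtype.ext ?_
        show M.bracket (M.sharp (αs i)) (M.sharp (αs j)) = M.sharp (M.kbr (αs i) (αs j))
        rw [kbr]
        exact (M.sharp_morph _ _).symm
      · intro l
        simp only [Fin.cons_succ]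
    · rfl

lemma toMV_sub {p : ℕ} (ω ω' : M.TForm p) :
    M.toMV (ω - ω') = M.toMV ω - M.toMV ω' := rfl

lemma tang_sub {p : ℕ} (ω ω' : M.TForm p) (hω : M.IsTangForm ω)
    (hω' : M.IsTangForm ω') : M.IsTangForm (ω - ω') := by
  refine ⟨?_, ?_, ?_⟩
  · intro Xs i Y Z
    simp only [Pi.sub_apply, hω.1 Xs i Y Z, hω'.1 Xs i Y Z]
    ring
  · intro Xs i f Y
    simp only [Pi.sub_apply, hω.2.1 Xs i f Y, hω'.2.1 Xs i f Y]
    ring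
  · intro Xs i j hij hXs
    simp only [Pi.sub_apply, hω.2.2 Xs i j hij hXs, hω'.2.2 Xs i j hij hXs, sub_zero]

end PoissonCtx

/-- Let `(P, π)` be a regular Poisson manifold with symplectic
foliation `F`.  The map `π : 𝒜^p_F(P) → 𝔛^p₀(P)` defined by
`π(ω)(α₁, …, α_p) = ω(π(α₁), …, π(α_p))` is an isomorphism from tangential
`p`-forms onto the space `𝔛^p₀(P)` of `p`-multivector fields annihilated by the
kernel of `π`, and it intertwines the differentials: `π(d_F ω) = d_π(π(ω))`.
Consequently `π` induces an isomorphism `π^* : H^p_F(P) → H^p(𝔛^•₀(P))` from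
leafwise cohomology onto the cohomology of the subcomplex `(𝔛^•₀(P), d_π)`
(expressed below at the level of representatives of cohomology classes). -/
theorem tangential_forms_iso_X0 (M : PoissonCtx) :
    -- `π` maps tangential `p`-forms into `𝔛^p₀(P)`
    (∀ (p : ℕ) (ω : M.TForm p), M.IsTangForm ω →
      M.IsMultiVec (M.toMV ω) ∧ M.InX0MV (M.toMV ω))
    -- `π` is injective on tangential `p`-forms
    ∧ (∀ (p : ℕ) (ω ω' : M.TForm p), M.IsTangForm ω → M.IsTangForm ω' →
        M.toMV ω = M.toMV ω' → ω = ω')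
    -- `π` is surjective onto `𝔛^p₀(P)`
    ∧ (∀ (p : ℕ) (Q : M.MultiVec p), M.IsMultiVec Q → M.InX0MV Q →
        ∃ ω : M.TForm p, M.IsTangForm ω ∧ M.toMV ω = Q)
    -- `π` is a chain map: `π(d_F ω) = d_π(π(ω))`
    ∧ (∀ (p : ℕ) (ω : M.TForm p), M.toMV (M.dF ω) = M.dpi (M.toMV ω))
    -- hence `π` induces an isomorphism `H^p_F(P) ≅ H^p(𝔛^•₀(P))` on cohomology:
    -- it is injective on classes of cocycles…
    ∧ (∀ (p : ℕ) (ω ω' : M.TForm (p + 1)), M.IsTangForm ω → M.IsTangForm ω' →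
        M.dF ω = 0 → M.dF ω' = 0 →
        ((∃ θ : M.TForm p, M.IsTangForm θ ∧ M.dF θ = ω - ω') ↔
          (∃ R : M.MultiVec p, M.IsMultiVec R ∧ M.InX0MV R ∧
            M.dpi R = M.toMV ω - M.toMV ω')))
    -- …and surjective onto classes of cocycles of `(𝔛^•₀(P), d_π)`
    ∧ (∀ (p : ℕ) (Q : M.MultiVec (p + 1)), M.IsMultiVec Q → M.InX0MV Q →
        M.dpi Q = 0 →
        ∃ ω : M.TForm (p + 1), M.IsTangForm ω ∧ M.dF ω = 0 ∧ M.toMV ω = Q) := by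
  refine ⟨fun p ω hω => M.toMV_tang ω hω,
    fun p ω ω' _ _ h => M.toMV_inj ω ω' h,
    fun p Q hQ h0 => ⟨M.ωof Q, M.ωof_tang Q hQ h0, M.toMV_ωof Q hQ h0⟩,
    fun p ω => M.chain_map ω, ?_, ?_⟩
  · intro p ω ω' hω hω' _ _
    constructor
    · rintro ⟨θ, hθ, hdθ⟩
      refine ⟨M.toMV θ, (M.toMV_tang θ hθ).1, (M.toMV_tang θ hθ).2, ?_⟩
      rw [← M.chain_map, hdθ, M.toMV_sub]
    · rintro ⟨R, hR1, hR2, hR3⟩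
      refine ⟨M.ωof R, M.ωof_tang R hR1 hR2, ?_⟩
      apply M.toMV_inj
      rw [M.chain_map, M.toMV_ωof R hR1 hR2, hR3, M.toMV_sub]
  · intro p Q hQ h0 hd
    refine ⟨M.ωof Q, M.ωof_tang Q hQ h0, ?_, M.toMV_ωof Q hQ h0⟩
    apply M.toMV_inj
    rw [M.chain_map, M.toMV_ωof Q hQ h0, hd]
    rfl
end
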